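/- Optimality of the static top-B cache under the independent reference model (Section 4.1). In the discrete-time caching model with equal-size objects, suppose additionally that there is a fixed probability vector q : Fin n → ℝ (q_i ≥ 0, ∑_i q_i = 1) such that p_k(i)(ω) = q_i for all k, i, ω (requests are i.i.d. with P(R_k = i) = q_i, independent of the past). Let Top ⊆ Fin n with |Top| = B and q_j ≤ q_i for every i ∈ Top and j ∉ Top. Then for every non-anticipative caching policy (C_k) and every K ≥ 1, E[∑_{k=1}^K 1(R_k ∈ C_k)] ≤ K·∑_{i ∈ Top} q_i, and the static policy C_k ≡ Top achieves E[∑_{k=1}^K 1(R_k ∈ Top)] = K·∑_{i ∈ Top} q_i. In particular, the optimal stationary hit probability equals ∑_{i ∈ Top} q_i (which is ∑_{i=1}^B λ_i / ∑_{j=1}^n λ_j when q_i = λ_i/∑_j λ_j and λ_1 ≥ ⋯ ≥ λ_n). -/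

import Mathlib

/-!
The cache `C k` is fixed before `R k` is revealed, and given the past `R k` is distributed
according to `q`; hence the hit probability at step `k` is `E[∑_{i ∈ C k} q i]`. Any set of
`B` objects has `q`-mass at most that of `Top`, so every step contributes at most
`∑_{i ∈ Top} q i`, with equality for the static cache `Top`.
-/

open MeasureTheory Finset

theorem Finset.sum_le_sum_of_card_eq_of_dominating {ι M : Type*} [DecidableEq ι]
    [AddCommMonoid M] [LinearOrder M] [IsOrderedAddMonoid M] {f : ι → M} {s t : Finset ι}
    (hst : #s = #t) (ht : ∀ i ∈ t, ∀ j ∉ t, f j ≤ f i) :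
    ∑ i ∈ s, f i ≤ ∑ i ∈ t, f i := by
  rcases t.eq_empty_or_nonempty with rfl | hne
  · simp_all
  -- the least value on `t` separates the values on `t` from those off `t`
  obtain ⟨a, ha, hmin⟩ := t.exists_mem_eq_inf' hne f
  set c := t.inf' hne f
  calc ∑ i ∈ s, f i = ∑ i ∈ s ∩ t, f i + ∑ i ∈ s \ t, f i := (sum_inter_add_sum_sdiff ..).symm
    _ ≤ ∑ i ∈ t ∩ s, f i + #(s \ t) • c := by
      rw [inter_comm]
      gcongr
      exact sum_le_card_nsmul _ _ _ fun j hj => hmin ▸ ht a ha j (mem_sdiff.1 hj).2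
    _ ≤ ∑ i ∈ t ∩ s, f i + ∑ i ∈ t \ s, f i := by
      rw [card_sdiff_comm hst]
      gcongr
      exact card_nsmul_le_sum _ _ _ fun i hi => inf'_le f (mem_sdiff.1 hi).1
    _ = ∑ i ∈ t, f i := sum_inter_add_sum_sdiff ..

section RandomFinset

variable {Ω α : Type*} [Fintype α] [DecidableEq α] {m m0 : MeasurableSpace Ω} {μ : Measure Ω}

lemma sum_mem_eq_sum_indicator (f : α → Ω → ℝ) (S : Ω → Finset α) (ω : Ω) :
    ∑ i ∈ S ω, f i ω = ∑ i, {ω | i ∈ S ω}.indicator (f i) ω := by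
  simp [Set.indicator_apply, sum_ite_mem]

lemma integrable_sum_mem {S : Ω → Finset α} (hS : ∀ i, MeasurableSet {ω | i ∈ S ω})
    {f : α → Ω → ℝ} (hf : ∀ i, Integrable (f i) μ) :
    Integrable (fun ω => ∑ i ∈ S ω, f i ω) μ := by
  simp_rw [sum_mem_eq_sum_indicator f S]
  exact integrable_finsetSum _ fun i _ => (hf i).indicator (hS i)

lemma integral_sum_mem {S : Ω → Finset α} (hS : ∀ i, MeasurableSet {ω | i ∈ S ω})
    {f : α → Ω → ℝ} (hf : ∀ i, Integrable (f i) μ) :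
    ∫ ω, ∑ i ∈ S ω, f i ω ∂μ = ∑ i, ∫ ω in {ω | i ∈ S ω}, f i ω ∂μ := by
  simp_rw [sum_mem_eq_sum_indicator f S]
  rw [integral_finsetSum _ fun i _ => (hf i).indicator (hS i)]
  exact sum_congr rfl fun i _ => integral_indicator (hS i)

variable [MeasurableSpace α] [MeasurableSingletonClass α] [IsFiniteMeasure μ] {X : Ω → α}

omit [Fintype α] in
lemma integrable_ite_eq (hX : Measurable X) (i : α) :
    Integrable (fun ω => if X ω = i then (1 : ℝ) else 0) μ := by
  have h : Integrable ((X ⁻¹' {i}).indicator fun _ => (1 : ℝ)) μ :=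
    (integrable_const 1).indicator (hX (measurableSet_singleton i))
  exact h.congr (.of_forall fun ω => by by_cases hω : X ω = i <;> simp [hω])

lemma integrable_ite_mem (hX : Measurable X) {S : Ω → Finset α}
    (hS : ∀ i, MeasurableSet {ω | i ∈ S ω}) :
    Integrable (fun ω => if X ω ∈ S ω then (1 : ℝ) else 0) μ := by
  simpa only [sum_ite_eq] using integrable_sum_mem hS (integrable_ite_eq hX)

lemma integral_ite_mem_eq_integral_sum (hm : m ≤ m0) (hX : Measurable X) {p : α → Ω → ℝ}
    (hp : ∀ i, μ[fun ω => if X ω = i then (1 : ℝ) else 0 | m] =ᵐ[μ] p i)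
    {S : Ω → Finset α} (hS : ∀ i, MeasurableSet[m] {ω | i ∈ S ω}) :
    ∫ ω, (if X ω ∈ S ω then (1 : ℝ) else 0) ∂μ = ∫ ω, ∑ i ∈ S ω, p i ω ∂μ := by
  have hS0 i : MeasurableSet {ω | i ∈ S ω} := hm _ (hS i)
  have hp_int i : Integrable (p i) μ := integrable_condExp.congr (hp i)
  calc ∫ ω, (if X ω ∈ S ω then (1 : ℝ) else 0) ∂μ
      = ∫ ω, ∑ i ∈ S ω, (if X ω = i then (1 : ℝ) else 0) ∂μ := by simp only [sum_ite_eq]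
    _ = ∑ i, ∫ ω in {ω | i ∈ S ω}, (if X ω = i then (1 : ℝ) else 0) ∂μ :=
      integral_sum_mem hS0 (integrable_ite_eq hX)
    _ = ∑ i, ∫ ω in {ω | i ∈ S ω}, p i ω ∂μ := by
      refine sum_congr rfl fun i _ => ?_
      rw [← setIntegral_condExp hm (integrable_ite_eq hX i) (hS i)]
      exact setIntegral_congr_ae (hS0 i) ((hp i).mono fun _ h _ => h)
    _ = ∫ ω, ∑ i ∈ S ω, p i ω ∂μ := (integral_sum_mem hS0 hp_int).symm

end RandomFinset

section IndependentReferenceModel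

variable {Ω α : Type*} [Fintype α] [DecidableEq α] [MeasurableSpace α]
  [MeasurableSingletonClass α] {m m0 : MeasurableSpace Ω} {μ : Measure Ω} [IsProbabilityMeasure μ]
  {X : Ω → α} {q : α → ℝ}

lemma integral_ite_mem_le_sum_of_dominating (hm : m ≤ m0) (hX : Measurable X)
    (hq : ∀ i, μ[fun ω => if X ω = i then (1 : ℝ) else 0 | m] =ᵐ[μ] fun _ => q i)
    {T : Finset α} (hT : ∀ i ∈ T, ∀ j ∉ T, q j ≤ q i)
    {S : Ω → Finset α} (hS : ∀ i, MeasurableSet[m] {ω | i ∈ S ω}) (hS_card : ∀ ω, #(S ω) = #T) :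
    ∫ ω, (if X ω ∈ S ω then (1 : ℝ) else 0) ∂μ ≤ ∑ i ∈ T, q i := by
  rw [integral_ite_mem_eq_integral_sum hm hX hq hS]
  calc ∫ ω, ∑ i ∈ S ω, q i ∂μ ≤ ∫ _, ∑ i ∈ T, q i ∂μ :=
        integral_mono (integrable_sum_mem (fun i => hm _ (hS i)) fun _ => integrable_const _)
          (integrable_const _) fun ω => sum_le_sum_of_card_eq_of_dominating (hS_card ω) hT
    _ = ∑ i ∈ T, q i := by simp

lemma integral_ite_mem_const (hm : m ≤ m0) (hX : Measurable X)
    (hq : ∀ i, μ[fun ω => if X ω = i then (1 : ℝ) else 0 | m] =ᵐ[μ] fun _ => q i) (T : Finset α) :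
    ∫ ω, (if X ω ∈ T then (1 : ℝ) else 0) ∂μ = ∑ i ∈ T, q i := by
  simpa using integral_ite_mem_eq_integral_sum hm hX hq (S := fun _ => T) fun _ => .const _

end IndependentReferenceModel

theorem static_topB_optimal_irm_general
    {Ω : Type*} {𝒜 : MeasurableSpace Ω} (μ : Measure Ω) [IsProbabilityMeasure μ]
    (ℱ : ℕ → MeasurableSpace Ω) (hℱ_le : ∀ k, ℱ k ≤ 𝒜)
    (n B : ℕ)
    (R : ℕ → Ω → Fin n) (hR : ∀ k, Measurable[ℱ k] (R k))
    -- the independent reference model: fixed request probabilities q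
    (q : Fin n → ℝ)
    (hq_cond : ∀ k, 1 ≤ k → ∀ i : Fin n,
      μ[(fun ω => if R k ω = i then (1 : ℝ) else 0) | ℱ (k - 1)]
        =ᵐ[μ] fun _ => q i)
    -- the set of the B most popular objects
    (Top : Finset (Fin n)) (hTop_card : Top.card = B)
    (hTop : ∀ i ∈ Top, ∀ j ∉ Top, q j ≤ q i)
    -- an arbitrary non-anticipative caching policy
    (C : ℕ → Ω → Finset (Fin n))
    (hC_meas : ∀ k, 1 ≤ k → ∀ i : Fin n, MeasurableSet[ℱ (k - 1)] {ω | i ∈ C k ω})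
    (hC_card : ∀ k ω, (C k ω).card = B)
    (K : ℕ) :
    (∫ ω, (∑ k ∈ Finset.Icc 1 K, if R k ω ∈ C k ω then (1 : ℝ) else 0) ∂μ
        ≤ K * ∑ i ∈ Top, q i)
    ∧ (∫ ω, (∑ k ∈ Finset.Icc 1 K, if R k ω ∈ Top then (1 : ℝ) else 0) ∂μ
        = K * ∑ i ∈ Top, q i) := by
  have hRk k : Measurable (R k) := (hR k).mono (hℱ_le k) le_rfl
  have hq {k} (hk : k ∈ Icc 1 K) := hq_cond k (mem_Icc.1 hk).1
  have hC {k} (hk : k ∈ Icc 1 K) := hC_meas k (mem_Icc.1 hk).1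
  rw [integral_finsetSum _ fun k hk => integrable_ite_mem (hRk k) fun i => hℱ_le _ _ (hC hk i),
    integral_finsetSum _ fun k _ => integrable_ite_mem (hRk k) fun _ => .const _]
  constructor
  · calc ∑ k ∈ Icc 1 K, ∫ ω, (if R k ω ∈ C k ω then (1 : ℝ) else 0) ∂μ
        ≤ ∑ k ∈ Icc 1 K, ∑ i ∈ Top, q i := sum_le_sum fun k hk =>
          integral_ite_mem_le_sum_of_dominating (hℱ_le _) (hRk k) (hq hk) hTop
            (hC hk) fun ω => (hC_card k ω).trans hTop_card.symm
      _ = K * ∑ i ∈ Top, q i := by simp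
  · calc ∑ k ∈ Icc 1 K, ∫ ω, (if R k ω ∈ Top then (1 : ℝ) else 0) ∂μ
        = ∑ k ∈ Icc 1 K, ∑ i ∈ Top, q i :=
          sum_congr rfl fun k hk => integral_ite_mem_const (hℱ_le _) (hRk k) (hq hk) Top
      _ = K * ∑ i ∈ Top, q i := by simp

/-- Optimality of the static top-B cache under the independent reference model
(Section 4.1): if each request is, conditionally on the past, for object `i` with a fixed
probability `q i`, then every non-anticipative policy gets at most `K·∑_{i ∈ Top} q i`
expected hits in the first `K` requests, and the static policy caching the top-`B` set
`Top` achieves exactly this value. -/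
theorem static_topB_optimal_irm
    {Ω : Type*} {𝒜 : MeasurableSpace Ω} (μ : Measure Ω) [IsProbabilityMeasure μ]
    (ℱ : ℕ → MeasurableSpace Ω) (hℱ_le : ∀ k, ℱ k ≤ 𝒜) (hℱ_mono : Monotone ℱ)
    (n B : ℕ) (hB : B ≤ n)
    (R : ℕ → Ω → Fin n) (hR : ∀ k, Measurable[ℱ k] (R k))
    -- the independent reference model: fixed request probabilities q
    (q : Fin n → ℝ) (hq_nonneg : ∀ i, 0 ≤ q i) (hq_sum : ∑ i, q i = 1)
    (hq_cond : ∀ k, 1 ≤ k → ∀ i : Fin n,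
      μ[(fun ω => if R k ω = i then (1 : ℝ) else 0) | ℱ (k - 1)]
        =ᵐ[μ] fun _ => q i)
    -- the set of the B most popular objects
    (Top : Finset (Fin n)) (hTop_card : Top.card = B)
    (hTop : ∀ i ∈ Top, ∀ j ∉ Top, q j ≤ q i)
    -- an arbitrary non-anticipative caching policy
    (C : ℕ → Ω → Finset (Fin n))
    (hC_meas : ∀ k, 1 ≤ k → ∀ i : Fin n, MeasurableSet[ℱ (k - 1)] {ω | i ∈ C k ω})
    (hC_card : ∀ k ω, (C k ω).card = B)
    (K : ℕ) (hK : 1 ≤ K) :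
    (∫ ω, (∑ k ∈ Finset.Icc 1 K, if R k ω ∈ C k ω then (1 : ℝ) else 0) ∂μ
        ≤ K * ∑ i ∈ Top, q i)
    ∧ (∫ ω, (∑ k ∈ Finset.Icc 1 K, if R k ω ∈ Top then (1 : ℝ) else 0) ∂μ
        = K * ∑ i ∈ Top, q i) :=
  static_topB_optimal_irm_general μ ℱ hℱ_le n B R hR q hq_cond Top hTop_card hTop C hC_meas hC_card
    K
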